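/- Suppose G is a finite simple graph of order n such that every connected component of G and of its complement Ḡ has at least 3 vertices and γ_P(G) = n/3. Then γ_P(Ḡ) ≤ 2. If, in addition, G has a connected component of order at least 6 that belongs to the family T, then γ_P(Ḡ) = 1. -/

import Mathlib

/-- The set of observed vertices in the power domination process started from `S`:
initially `N[S]` (the closed neighborhood of `S`), and while some observed vertex `v`
has exactly one unobserved neighbor `w`, `w` becomes observed. -/
inductive SimpleGraph.Observed {V : Type*} (G : SimpleGraph V) (S : Set V) : V → Prop
  | mem : ∀ v ∈ S, SimpleGraph.Observed G S v
  | dominate : ∀ v ∈ S, ∀ w, G.Adj v w → SimpleGraph.Observed G S w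
  | force : ∀ v w, SimpleGraph.Observed G S v → G.Adj v w →
      (∀ u, G.Adj v u → u ≠ w → SimpleGraph.Observed G S u) → SimpleGraph.Observed G S w

/-- `S` is a power dominating set of `G` if every vertex becomes observed. -/
def SimpleGraph.IsPowerDominating {V : Type*} (G : SimpleGraph V) (S : Set V) : Prop :=
  ∀ v, G.Observed S v

/-- The power domination number: minimum cardinality of a power dominating set. -/
noncomputable def SimpleGraph.powerDomNum {V : Type*} (G : SimpleGraph V) : ℕ :=
  sInf {k | ∃ S : Finset V, S.card = k ∧ G.IsPowerDominating ↑S}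

/-- `S` is a dominating set of `G` if `N[S] = V`. -/
def SimpleGraph.IsDominating {V : Type*} (G : SimpleGraph V) (S : Set V) : Prop :=
  ∀ v, v ∈ S ∨ ∃ u ∈ S, G.Adj u v

/-- The domination number: minimum cardinality of a dominating set. -/
noncomputable def SimpleGraph.domNum {V : Type*} (G : SimpleGraph V) : ℕ :=
  sInf {k | ∃ S : Finset V, S.card = k ∧ G.IsDominating ↑S}

/-- The minimum degree `δ(G)`. -/
noncomputable def SimpleGraph.minDeg {V : Type*} (G : SimpleGraph V) : ℕ :=
  sInf (Set.range fun v => (G.neighborSet v).ncard)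

/-- The vertex connectivity `κ(G)`: the minimum cardinality of a set `S` of vertices
such that removing `S` disconnects `G` (leaves a non-preconnected graph) or leaves
at most one vertex.  In particular `κ(Kₙ) = n - 1` and `κ(G) = 0` for disconnected `G`. -/
noncomputable def SimpleGraph.vertexConn {V : Type*} (G : SimpleGraph V) [Fintype V] : ℕ :=
  sInf {k | ∃ S : Finset V, S.card = k ∧
    (¬ (G.induce ((↑S : Set V)ᶜ)).Preconnected ∨ Fintype.card V ≤ S.card + 1)}

/-- The edge connectivity `λ(G)`: the minimum cardinality of a set of edges of `G`
whose removal disconnects `G`. -/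
noncomputable def SimpleGraph.edgeConn {V : Type*} (G : SimpleGraph V) : ℕ :=
  sInf {k | ∃ F : Finset (Sym2 V), ↑F ⊆ G.edgeSet ∧ F.card = k ∧
    ¬ (G.deleteEdges ↑F).Preconnected}

/-- `G` is super-λ: `G` is maximally connected (`κ(G) = λ(G) = δ(G)`) and every
minimum edge-cut is trivial, i.e. consists of all edges incident with a single vertex. -/
def SimpleGraph.IsSuperLambda {V : Type*} (G : SimpleGraph V) [Fintype V] : Prop :=
  G.vertexConn = G.edgeConn ∧ G.edgeConn = G.minDeg ∧
  ∀ F : Finset (Sym2 V), ↑F ⊆ G.edgeSet → ¬ (G.deleteEdges ↑F).Preconnected →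
    F.card = G.edgeConn → ∃ v : V, (↑F : Set (Sym2 V)) = {e ∈ G.edgeSet | v ∈ e}

/-- The family `T`: graphs obtained from a connected graph `H` (the induced graph on `A`)
by adding, for each vertex `a` of `H`, two new vertices `p a` and `q a`, each adjacent to
`a` and possibly to each other, but to no other vertices. -/
def SimpleGraph.InFamilyT {W : Type*} (K : SimpleGraph W) : Prop :=
  ∃ (A : Set W) (p q : A → W),
    (∀ a, p a ∉ A) ∧ (∀ a, q a ∉ A) ∧
    Function.Injective p ∧ Function.Injective q ∧
    (∀ a b, p a ≠ q b) ∧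
    (∀ w, w ∉ A → ∃ a, w = p a ∨ w = q a) ∧
    (K.induce A).Connected ∧
    (∀ a : A, K.Adj (p a) ↑a ∧ K.Adj (q a) ↑a ∧
      (∀ w, K.Adj (p a) w → w = ↑a ∨ w = q a) ∧
      (∀ w, K.Adj (q a) w → w = ↑a ∨ w = p a))

/-!
Write `n = 3k` with `k = γ_P(G)` and suppose `γ_P(Gᶜ) > 2`. As `Gᶜ` has no isolated vertex,
for any `u, z` the vertices that `{u, z}` leaves unobserved in `Gᶜ` are common `G`-neighbours
of `u` and `z`, and there are at least two of them, since a single one would be forced. So any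
two vertices of `G` have two common neighbours, and this yields a dominating set of `G` with
fewer than `k` vertices, contradicting `γ_P(G) ≤ γ(G)`. If some vertex `u` has degree at most
`k + 1`, delete one vertex, or a pair of vertices that is not the trace on `N(u)` of any
neighbourhood, from `N(u)`. If all degrees are at least `k + 2`, then `k ≥ 3` because the
components of `Gᶜ` have at least three vertices, and a union bound over the `(k - 1)`-sets shows
that one of them lies in no non-neighbourhood.

For the family `T`: let `a'` be a neighbour of `a` in `H`. In `Gᶜ` the leaf `p a` dominates
every vertex except `a` and `q a`; then `a'` forces `q a`, and `p a'` forces `a`.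
-/

open Finset

lemma Nat.choose_two_mul_two (n : ℕ) : n.choose 2 * 2 = n * (n - 1) := by
  rw [Nat.choose_two_right, Nat.div_mul_cancel (Nat.even_mul_pred_self n).two_dvd]

lemma Nat.three_mul_mul_choose_lt {k : ℕ} (hk : 3 ≤ k) :
    3 * k * (2 * k - 3).choose (k - 1) < (3 * k).choose (k - 1) := by
  obtain ⟨m, rfl⟩ := Nat.exists_eq_add_of_le' hk
  rw [show 2 * (m + 3) - 3 = 2 * (m + 1) + 1 by omega, show m + 3 - 1 = m + 2 by omega,
    show 3 * (m + 3) = 2 * (m + 1) + 1 + (m + 6) by ring,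
    Nat.add_choose_eq (2 * (m + 1) + 1) (m + 6)]
  have hsym : (2 * (m + 1) + 1).choose (m + 1) = (2 * (m + 1) + 1).choose (m + 2) :=
    (Nat.choose_symm_half (m + 1)).symm
  have hratio : (2 * (m + 1) + 1).choose (m + 1) * (m + 1)
      = (2 * (m + 1) + 1).choose m * (m + 3) := by
    rw [Nat.choose_succ_right_eq, show 2 * (m + 1) + 1 - m = m + 3 by omega]
  have hc : 0 < (2 * (m + 1) + 1).choose (m + 2) := Nat.choose_pos (by omega)
  have h2 : (m + 6).choose 2 * 2 = (m + 6) * (m + 5) := Nat.choose_two_mul_two (m + 6)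
  -- three terms of Vandermonde's identity already suffice
  have hV := sum_le_sum_of_subset (f := fun ij : ℕ × ℕ =>
      (2 * (m + 1) + 1).choose ij.1 * (m + 6).choose ij.2)
    (show {(m + 2, 0), (m + 1, 1), (m, 2)} ⊆ antidiagonal (m + 2) by
      intro ij hij
      simp only [mem_insert, mem_singleton] at hij
      rcases hij with rfl | rfl | rfl <;> simp)
  rw [sum_insert (by simp), sum_insert (by simp), sum_singleton] at hV
  simp only [Nat.choose_zero_right, Nat.choose_one_right, mul_one, hsym] at hV hratio
  generalize (2 * (m + 1) + 1).choose (m + 2) = c at *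
  generalize (2 * (m + 1) + 1).choose m = e at *
  generalize (m + 6).choose 2 = b at *
  have heb : (m + 3) * (e * b) * 2 = c * (m + 1) * ((m + 6) * (m + 5)) := by
    rw [← h2, ← mul_assoc, hratio]; ring
  -- after multiplying by `2 (m + 3)`, the difference is `c (m³ + 8m² + 25m + 18)`
  have : 2 * (m + 3) * (3 * (m + 3) * c) < 2 * (m + 3) * (c + (c * (m + 6) + e * b)) := by
    nlinarith [mul_pos hc (by positivity : 0 < m ^ 3 + 8 * m ^ 2 + 25 * m + 18)]
  linarith [Nat.lt_of_mul_lt_mul_left this]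

namespace SimpleGraph

variable {V : Type*} {G : SimpleGraph V}

section PowerDomination

lemma not_observed_empty {v : V} : ¬ G.Observed ∅ v := by
  intro h
  induction h with
  | mem _ hv => exact hv
  | dominate _ hv => exact hv
  | force _ _ _ _ _ ih => exact ih

lemma observed_of_forall_ne {S : Set V} {v w : V} (hvw : G.Adj v w)
    (h : ∀ u, u ≠ w → G.Observed S u) : G.Observed S w :=
  .force v w (h v hvw.ne) hvw fun u _ hu => h u hu

lemma IsDominating.isPowerDominating {S : Set V} (h : G.IsDominating S) :
    G.IsPowerDominating S := fun v =>
  (h v).elim (.mem v) fun ⟨u, hu, huv⟩ => .dominate u hu v huv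

lemma powerDomNum_le_card {S : Finset V} (h : G.IsPowerDominating S) :
    G.powerDomNum ≤ #S :=
  Nat.sInf_le ⟨S, rfl, h⟩

lemma powerDomNum_pos [Fintype V] [Nonempty V] : 0 < G.powerDomNum := by
  refine Nat.pos_of_ne_zero fun h => ?_
  rcases Nat.sInf_eq_zero.mp h with ⟨S, hS, hpd⟩ | hempty
  · rw [Finset.card_eq_zero.mp hS, Finset.coe_empty] at hpd
    exact not_observed_empty (hpd (Classical.arbitrary V))
  · exact hempty.subset ⟨univ, rfl, fun v => .mem v (by simp)⟩

lemma adj_of_not_observed_compl {S : Set V} {u w : V} (hu : u ∈ S)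
    (hw : ¬ Gᶜ.Observed S w) : G.Adj u w := by
  by_contra h
  have hwS : w ∉ S := fun hwS => hw (.mem w hwS)
  exact hw (.dominate u hu w ((compl_adj G u w).mpr ⟨fun e => hwS (e ▸ hu), h⟩))

lemma two_le_card_inter_neighborFinset [Fintype V] [DecidableEq V] [DecidableRel G.Adj]
    (hiso : ∀ v, ∃ x, Gᶜ.Adj v x) {u z : V} (h : ¬ Gᶜ.IsPowerDominating {u, z}) :
    2 ≤ #(G.neighborFinset u ∩ G.neighborFinset z) := by
  obtain ⟨w, hw⟩ := not_forall.mp h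
  obtain ⟨w', hw', hne⟩ : ∃ w', ¬ Gᶜ.Observed {u, z} w' ∧ w' ≠ w := by
    by_contra! hall
    obtain ⟨x, hx⟩ := hiso w
    exact hw (observed_of_forall_ne hx.symm fun v hv => by_contra fun h => hv (hall v h))
  have hmem : ∀ v, ¬ Gᶜ.Observed {u, z} v →
      v ∈ G.neighborFinset u ∩ G.neighborFinset z := fun v hv => by
    simpa using ⟨adj_of_not_observed_compl (by simp) hv, adj_of_not_observed_compl (by simp) hv⟩
  exact one_lt_card.mpr ⟨w, hmem w hw, w', hmem w' hw', hne.symm⟩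

end PowerDomination

section Domination

variable [Fintype V] [DecidableEq V] [DecidableRel G.Adj]

lemma isDominating_neighborFinset_sdiff
    (hcommon : ∀ v w, 2 ≤ #(G.neighborFinset v ∩ G.neighborFinset w)) {u : V} {X : Finset V}
    (hX : #X ≤ 2) (hne : (G.neighborFinset u \ X).Nonempty)
    (hout : ∀ z ∈ Gᶜ.neighborFinset u, ¬ G.neighborFinset z ∩ G.neighborFinset u ⊆ X) :
    G.IsDominating ↑(G.neighborFinset u \ X) := by
  intro v
  by_cases hvD : v ∈ G.neighborFinset u \ X
  · exact Or.inl hvD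
  right
  by_cases hvu : v = u
  · obtain ⟨w, hw⟩ := hne
    exact ⟨w, hw, hvu ▸ ((G.mem_neighborFinset u w).mp (mem_sdiff.mp hw).1).symm⟩
  suffices ¬ G.neighborFinset v ∩ G.neighborFinset u ⊆ X by
    obtain ⟨w, hw, hwX⟩ := not_subset.mp this
    rw [mem_inter, mem_neighborFinset, mem_neighborFinset] at hw
    exact ⟨w, by simp [hw.2, hwX], hw.1.symm⟩
  by_cases hvN : v ∈ G.neighborFinset u
  · -- `v ∈ X` is not its own neighbour, so at most one common neighbour lies in `X`
    intro hsub
    have hvX : v ∈ X := by simpa [hvN] using hvD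
    have hsub' : G.neighborFinset v ∩ G.neighborFinset u ⊆ X.erase v := fun w hw =>
      mem_erase.mpr ⟨fun e => by simp [e] at hw, hsub hw⟩
    have := card_le_card hsub'
    have := hcommon v u
    rw [card_erase_of_mem hvX] at *
    omega
  · exact hout v (by simpa [hvu, Ne.symm hvu] using hvN)

lemma exists_isDominating_card_eq_degree_sub_one
    (hcommon : ∀ v w, 2 ≤ #(G.neighborFinset v ∩ G.neighborFinset w)) (u : V) :
    ∃ S : Finset V, #S = G.degree u - 1 ∧ G.IsDominating ↑S := by
  have hdeg : 2 ≤ G.degree u := by simpa using hcommon u u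
  obtain ⟨x, hx⟩ := (G.neighborFinset u).card_pos.mp
    (by rw [card_neighborFinset_eq_degree]; omega)
  have hcard : #(G.neighborFinset u \ {x}) = G.degree u - 1 := by
    rw [card_sdiff_of_subset (singleton_subset_iff.mpr hx), card_singleton,
      card_neighborFinset_eq_degree]
  refine ⟨_, hcard, isDominating_neighborFinset_sdiff hcommon (by simp) (card_pos.mp (by omega))
    fun z _ hz => ?_⟩
  have := card_le_card hz
  have := hcommon z u
  simp only [card_singleton] at *
  omega

lemma exists_isDominating_card_eq_degree_sub_two
    (hcommon : ∀ v w, 2 ≤ #(G.neighborFinset v ∩ G.neighborFinset w)) {u : V}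
    (hdeg : 3 ≤ G.degree u) (hcompl : Gᶜ.degree u < (G.degree u).choose 2) :
    ∃ S : Finset V, #S = G.degree u - 2 ∧ G.IsDominating ↑S := by
  let trace : V → Finset V := fun z => G.neighborFinset z ∩ G.neighborFinset u
  obtain ⟨X, hX, hXtrace⟩ : ∃ X ∈ (G.neighborFinset u).powersetCard 2,
      X ∉ (Gᶜ.neighborFinset u).image trace := by
    refine exists_mem_notMem_of_card_lt_card (card_image_le.trans_lt ?_)
    rwa [card_powersetCard, card_neighborFinset_eq_degree, card_neighborFinset_eq_degree]
  obtain ⟨hXu, hX2⟩ := mem_powersetCard.mp hX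
  have hcard : #(G.neighborFinset u \ X) = G.degree u - 2 := by
    rw [card_sdiff_of_subset hXu, hX2, card_neighborFinset_eq_degree]
  refine ⟨_, hcard, isDominating_neighborFinset_sdiff hcommon hX2.le (card_pos.mp (by omega))
    fun z hz hsub => hXtrace (mem_image.mpr ⟨z, hz, eq_of_subset_of_card_le hsub ?_⟩)⟩
  rw [hX2]
  exact hcommon z u

/-- Union bound: a set of size `s` fails to dominate only if it lies inside the
non-neighbourhood of some vertex. -/
lemma exists_isDominating_of_card_mul_choose_lt {s d : ℕ} (hd : ∀ v, Gᶜ.degree v ≤ d)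
    (h : Fintype.card V * d.choose s < (Fintype.card V).choose s) :
    ∃ S : Finset V, #S = s ∧ G.IsDominating ↑S := by
  let bad := univ.biUnion fun v => (Gᶜ.neighborFinset v).powersetCard s
  have hbad : #bad < #(univ.powersetCard s) :=
    calc #bad ≤ ∑ v, #((Gᶜ.neighborFinset v).powersetCard s) := card_biUnion_le
      _ ≤ ∑ _v : V, d.choose s := sum_le_sum fun v _ => by
          rw [card_powersetCard, card_neighborFinset_eq_degree]
          exact Nat.choose_le_choose s (hd v)
      _ < #(univ.powersetCard s) := by simpa [card_powersetCard] using h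
  obtain ⟨S, hS, hSbad⟩ := exists_mem_notMem_of_card_lt_card hbad
  refine ⟨S, (mem_powersetCard.mp hS).2, fun v => ?_⟩
  by_contra! hv
  refine hSbad (mem_biUnion.mpr ⟨v, mem_univ v, mem_powersetCard.mpr ⟨fun u hu => ?_,
    (mem_powersetCard.mp hS).2⟩⟩)
  rw [mem_neighborFinset, compl_adj]
  exact ⟨fun e => hv.1 (e ▸ hu), fun huv => hv.2 u hu huv.symm⟩

end Domination

section Components

lemma exists_adj_of_one_lt_ncard_supp {v : V}
    (h : 1 < (G.connectedComponentMk v).supp.ncard) : ∃ w, G.Adj v w := by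
  obtain ⟨w, hw, hwv⟩ := Set.exists_ne_of_one_lt_ncard h v
  obtain ⟨p⟩ := (ConnectedComponent.eq.mp hw).symm
  exact ⟨_, p.adj_snd (p.not_nil_of_ne hwv.symm)⟩

variable [Fintype V] [DecidableRel G.Adj]

lemma Reachable.eq_or_adj_of_degree_le_one (h : ∀ v, G.degree v ≤ 1) {v w : V}
    (hvw : G.Reachable v w) : v = w ∨ G.Adj v w := by
  obtain ⟨p⟩ := hvw
  induction p with
  | nil => exact Or.inl rfl
  | @cons v y w hvy p ih =>
    rcases ih with rfl | hyw
    · exact Or.inr hvy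
    · left
      exact card_le_one.mp (h y) v (by simpa using hvy.symm) w (by simpa using hyw)

lemma ncard_supp_le_two_of_degree_le_one (h : ∀ v, G.degree v ≤ 1)
    (c : G.ConnectedComponent) : c.supp.ncard ≤ 2 := by
  classical
  refine c.ind fun v => ?_
  have hsub : (G.connectedComponentMk v).supp ⊆ ↑(insert v (G.neighborFinset v)) := by
    intro w hw
    rcases (ConnectedComponent.eq.mp hw).symm.eq_or_adj_of_degree_le_one h with rfl | hvw
    · simp
    · simp [hvw]
  calc _ ≤ #(insert v (G.neighborFinset v)) :=
        (Set.ncard_le_ncard hsub (Finset.finite_toSet _)).trans_eq (Set.ncard_coe_finset _)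
    _ ≤ 2 := (card_insert_le _ _).trans (by simpa using h v)

end Components

section FamilyT

lemma isPowerDominating_compl_singleton {v a b x y : V}
    (hv : ∀ w, G.Adj v w → w = a ∨ w = b) (hxa : G.Adj x a) (hxb : x ≠ b)
    (hxb' : ¬ G.Adj x b) (hya : y ≠ a) (hya' : ¬ G.Adj y a) :
    Gᶜ.IsPowerDominating {v} := by
  have hdom : ∀ w, w ≠ a → w ≠ b → Gᶜ.Observed {v} w := by
    intro w hwa hwb
    by_cases hwv : w = v
    · exact .mem w hwv
    refine .dominate v (Set.mem_singleton v) w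
      ((compl_adj G v w).mpr ⟨Ne.symm hwv, fun h => ?_⟩)
    rcases hv w h with rfl | rfl <;> contradiction
  have hb : Gᶜ.Observed {v} b := by
    refine .force x b (hdom x hxa.ne hxb) ((compl_adj G x b).mpr ⟨hxb, hxb'⟩)
      fun w hxw hwb => hdom w ?_ hwb
    rintro rfl
    exact ((compl_adj G x w).mp hxw).2 hxa
  have hne : ∀ w, w ≠ a → Gᶜ.Observed {v} w := fun w hwa =>
    (eq_or_ne w b).elim (· ▸ hb) (hdom w hwa)
  intro w
  by_cases hwa : w = a
  · exact hwa ▸ observed_of_forall_ne ((compl_adj G y a).mpr ⟨hya, hya'⟩) hne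
  · exact hne w hwa

lemma exists_isPowerDominating_compl_singleton_of_inFamilyT [Finite V]
    (c : G.ConnectedComponent) (h6 : 6 ≤ c.supp.ncard) (hT : (G.induce c.supp).InFamilyT) :
    ∃ v, Gᶜ.IsPowerDominating {v} := by
  obtain ⟨A, p, q, hpA, hqA, -, -, -, hcov, hconn, hadj⟩ := hT
  have : Nontrivial A := by
    have hsurj :
        Function.Surjective (Sum.elim (↑) (Sum.elim p q) : A ⊕ A ⊕ A → c.supp) := by
      intro w
      by_cases hw : w ∈ A
      · exact ⟨.inl ⟨w, hw⟩, rfl⟩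
      obtain ⟨a, rfl | rfl⟩ := hcov w hw
      · exact ⟨.inr (.inl a), rfl⟩
      · exact ⟨.inr (.inr a), rfl⟩
    have := Nat.card_le_card_of_surjective _ hsurj
    rw [Nat.card_sum, Nat.card_sum, Nat.card_coe_set_eq] at this
    exact Finite.one_lt_card_iff_nontrivial.mp (by omega)
  obtain ⟨a⟩ := (inferInstance : Nonempty A)
  obtain ⟨a', haa'⟩ := hconn.preconnected.exists_adj_of_nontrivial a
  have hne : a ≠ a' := haa'.ne
  refine ⟨p a, isPowerDominating_compl_singleton (a := a) (b := q a) (x := a') (y := p a')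
    (fun w hw => ?_) haa'.symm (fun h => hqA a (Subtype.val_injective h ▸ a'.2))
    (fun h => ?_) (fun h => hpA a' (Subtype.val_injective h ▸ a.2)) (fun h => ?_)⟩
  · rcases (hadj a).2.2.1 ⟨w, (c.mem_supp_congr_adj hw).mp (p a).2⟩ hw with h | h
    · exact Or.inl (congrArg Subtype.val h)
    · exact Or.inr (congrArg Subtype.val h)
  · rcases (hadj a).2.2.2 a' h.symm with h | h
    · exact hne (Subtype.val_injective h).symm
    · exact hpA a (h ▸ a'.2)
  · rcases (hadj a').2.2.1 a h with h | h
    · exact hne (Subtype.val_injective h)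
    · exact hqA a' (h ▸ a.2)

end FamilyT

lemma exists_isDominating_card_lt_of_degree_le [Fintype V] [DecidableEq V] [DecidableRel G.Adj]
    (hcommon : ∀ v w, 2 ≤ #(G.neighborFinset v ∩ G.neighborFinset w)) {k : ℕ}
    (hn : Fintype.card V = 3 * k) {u : V} (hu : G.degree u ≤ k + 1) (hu' : 0 < Gᶜ.degree u) :
    ∃ S : Finset V, #S < k ∧ G.IsDominating ↑S := by
  rw [degree_compl, hn] at hu'
  rcases (by omega : G.degree u ≤ k ∨ G.degree u = k + 1) with hu | hu
  · obtain ⟨S, hS, hdom⟩ := exists_isDominating_card_eq_degree_sub_one hcommon u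
    exact ⟨S, by omega, hdom⟩
  · have hk : 2 ≤ k := by omega
    have hchoose := Nat.choose_two_mul_two (k + 1)
    rw [Nat.add_sub_cancel] at hchoose
    have hcodeg : 3 * k - 1 - (k + 1) + 2 = 2 * k := by omega
    obtain ⟨S, hS, hdom⟩ := exists_isDominating_card_eq_degree_sub_two hcommon (u := u)
      (by omega) (by rw [degree_compl, hn, hu]; nlinarith)
    exact ⟨S, by omega, hdom⟩

lemma exists_isDominating_card_lt_of_forall_le_degree [Fintype V] [DecidableEq V]
    [DecidableRel G.Adj] {k : ℕ} (hn : Fintype.card V = 3 * k) (hk : 3 ≤ k)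
    (h : ∀ v, k + 2 ≤ G.degree v) : ∃ S : Finset V, #S < k ∧ G.IsDominating ↑S := by
  obtain ⟨S, hS, hdom⟩ := exists_isDominating_of_card_mul_choose_lt (G := G) (s := k - 1)
    (d := 2 * k - 3) (fun v => by rw [degree_compl, hn]; have := h v; omega)
    (by rw [hn]; exact Nat.three_mul_mul_choose_lt hk)
  exact ⟨S, by omega, hdom⟩

theorem powerDomNum_compl_le_two [Fintype V]
    (hGc : ∀ c : Gᶜ.ConnectedComponent, 3 ≤ c.supp.ncard)
    (hpd : 3 * G.powerDomNum = Fintype.card V) : Gᶜ.powerDomNum ≤ 2 := by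
  classical
  by_contra! hgt
  obtain ⟨v⟩ : Nonempty V := by
    by_contra! hV
    exact absurd (powerDomNum_le_card (G := Gᶜ) (S := ∅) isEmptyElim) (by simp; omega)
  have hiso : ∀ v, ∃ x, Gᶜ.Adj v x := fun v =>
    exists_adj_of_one_lt_ncard_supp (by have := hGc (Gᶜ.connectedComponentMk v); omega)
  have hcommon : ∀ u z, 2 ≤ #(G.neighborFinset u ∩ G.neighborFinset z) := fun u z =>
    two_le_card_inter_neighborFinset hiso fun h => by
      have := powerDomNum_le_card (S := {u, z}) (by rwa [coe_pair])
      have := card_le_two (a := u) (b := z)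
      omega
  suffices ∃ S : Finset V, #S < G.powerDomNum ∧ G.IsDominating ↑S by
    obtain ⟨S, hSk, hS⟩ := this
    exact absurd (powerDomNum_le_card hS.isPowerDominating) (by omega)
  by_cases hlow : ∃ u, G.degree u ≤ G.powerDomNum + 1
  · obtain ⟨u, hu⟩ := hlow
    exact exists_isDominating_card_lt_of_degree_le hcommon hpd.symm hu
      ((Gᶜ.degree_pos_iff_exists_adj u).mpr (hiso u))
  push Not at hlow
  have hk : 3 ≤ G.powerDomNum := by
    -- otherwise `Gᶜ` has maximum degree at most one
    by_contra
    have := ncard_supp_le_two_of_degree_le_one (G := Gᶜ)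
      (fun w => by rw [degree_compl, ← hpd]; have := hlow w; omega) (Gᶜ.connectedComponentMk v)
    have := hGc (Gᶜ.connectedComponentMk v)
    omega
  exact exists_isDominating_card_lt_of_forall_le_degree hpd.symm hk hlow

end SimpleGraph

theorem powerDomNum_compl_le_two_of_extremal_general {V : Type*} [Fintype V] (G : SimpleGraph V)
    (hGc : ∀ c : Gᶜ.ConnectedComponent, 3 ≤ c.supp.ncard)
    (hpd : 3 * G.powerDomNum = Fintype.card V) :
    Gᶜ.powerDomNum ≤ 2 ∧
    ((∃ c : G.ConnectedComponent, 6 ≤ c.supp.ncard ∧ (G.induce c.supp).InFamilyT) →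
      Gᶜ.powerDomNum = 1) := by
  refine ⟨G.powerDomNum_compl_le_two hGc hpd, fun ⟨c, hc6, hT⟩ => ?_⟩
  obtain ⟨v, hv⟩ := G.exists_isPowerDominating_compl_singleton_of_inFamilyT c hc6 hT
  have : Nonempty V := ⟨v⟩
  exact le_antisymm (by simpa using SimpleGraph.powerDomNum_le_card (S := {v}) (by simpa using hv))
    SimpleGraph.powerDomNum_pos

theorem powerDomNum_compl_le_two_of_extremal {V : Type*} [Fintype V] (G : SimpleGraph V)
    (hG : ∀ c : G.ConnectedComponent, 3 ≤ c.supp.ncard)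
    (hGc : ∀ c : Gᶜ.ConnectedComponent, 3 ≤ c.supp.ncard)
    (hpd : 3 * G.powerDomNum = Fintype.card V) :
    Gᶜ.powerDomNum ≤ 2 ∧
    ((∃ c : G.ConnectedComponent, 6 ≤ c.supp.ncard ∧ (G.induce c.supp).InFamilyT) →
      Gᶜ.powerDomNum = 1) :=
  powerDomNum_compl_le_two_of_extremal_general G hGc hpd
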